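/- arXiv:2411.13505 — 2 statements merged into one kernel-verified Lean document; each statement's English description precedes it below -/
import Mathlib

section
/- Let d ≥ 3 and let A = {x_1, …, x_n} ⊂ Z^d be a finite set of n distinct points. Then Cap(A) = Σ_{k=1}^n P_{x_k}(W[1,∞) ∩ {x_1, …, x_k} = ∅) · P_{x_k}(W[1,∞) ∩ {x_1, …, x_{k−1}} = ∅), where W is a simple random walk on Z^d started at x_k. -/
open MeasureTheory ProbabilityTheory Filter Topology

namespace LERWCap

/-- The lattice `ℤ^d`. -/
abbrev Zd (d : ℕ) := Fin d → ℤ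

/-- Euclidean norm on `ℤ^d`. -/
noncomputable def zNorm {d : ℕ} (x : Zd d) : ℝ := Real.sqrt (∑ i, ((x i : ℝ)) ^ 2)

/-- The set of unit steps of the simple random walk on `ℤ^d`. -/
def unitSteps (d : ℕ) : Set (Zd d) := {x | (∑ i, |x i|) = 1}

/-- `S` is a simple random walk on `ℤ^d` started at `0` under the probability measure `μ`:
its increments are i.i.d., uniform on the `2d` unit steps, and `S 0 = 0`. -/
structure IsSRW {Ω : Type*} [MeasurableSpace Ω] (μ : Measure Ω) (d : ℕ)
    (S : Ω → ℕ → Zd d) : Prop where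
  meas : ∀ n, Measurable fun ω => S ω n
  start : ∀ᵐ ω ∂μ, S ω 0 = 0
  indep : iIndepFun (fun n ω => S ω (n + 1) - S ω n) μ
  step : ∀ n, μ.map (fun ω => S ω (n + 1) - S ω n) = uniformOn (unitSteps d)

/-- The loop-erasure times `ℓ_i`: `ℓ_0 = 0`, `ℓ_{i+1} = 1 + max {k : p k = p (ℓ_i)}`
(for a transient path the set is finite and `sSup` is its maximum). -/
noncomputable def leTime {d : ℕ} (p : ℕ → Zd d) : ℕ → ℕ
  | 0 => 0
  | i + 1 => sSup {k | p k = p (leTime p i)} + 1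

/-- The loop-erasure `LE(p)` of a (transient) path `p`. -/
noncomputable def loopErase {d : ℕ} (p : ℕ → Zd d) (i : ℕ) : Zd d := p (leTime p i)

/-- The set of points `p[0,n]` visited by a one-sided path up to time `n`. -/
noncomputable def pathRange {d : ℕ} (p : ℕ → Zd d) (n : ℕ) : Finset (Zd d) :=
  (Finset.range (n + 1)).image p

/-- The set of points `p[0,n]` visited by a two-sided path at times `0,...,n`. -/
noncomputable def pathRangeZ {d : ℕ} (p : ℤ → Zd d) (n : ℕ) : Finset (Zd d) :=
  (Finset.range (n + 1)).image fun i : ℕ => p (i : ℤ)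

/-- Escape probability: the probability that a simple random walk `W` (law `μW`, started at `0`)
translated to start at `x` never returns to `A` at positive times, i.e.
`P_x(W[1,∞) ∩ A = ∅)`. -/
noncomputable def escProb {ΩW : Type*} [MeasurableSpace ΩW] (μW : Measure ΩW) {d : ℕ}
    (W : ΩW → ℕ → Zd d) (x : Zd d) (A : Set (Zd d)) : ℝ :=
  (μW {w | ∀ k, 1 ≤ k → x + W w k ∉ A}).toReal

/-- Hitting probability `P_x(W[0,∞) ∩ A ≠ ∅)`. -/
noncomputable def hitProb {ΩW : Type*} [MeasurableSpace ΩW] (μW : Measure ΩW) {d : ℕ}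
    (W : ΩW → ℕ → Zd d) (x : Zd d) (A : Set (Zd d)) : ℝ :=
  (μW {w | ∃ k : ℕ, x + W w k ∈ A}).toReal

/-- Capacity of a finite set `A ⊆ ℤ^d`: `Cap(A) = ∑_{a ∈ A} P_a(W[1,∞) ∩ A = ∅)`,
where `W` is a simple random walk. -/
noncomputable def cap {ΩW : Type*} [MeasurableSpace ΩW] (μW : Measure ΩW) {d : ℕ}
    (W : ΩW → ℕ → Zd d) (A : Finset (Zd d)) : ℝ :=
  ∑ a ∈ A, escProb μW W a ↑A

/-- The left shift (with recentering) on two-sided paths: `(Tω)(k) = ω(k+1) − ω(1)`. -/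
def shiftZ {d : ℕ} (p : ℤ → Zd d) : ℤ → Zd d := fun k => p (k + 1) - p 1

/-- Restriction of a two-sided path to nonnegative times. -/
def toOneSided {d : ℕ} (p : ℤ → Zd d) : ℕ → Zd d := fun n => p (n : ℤ)

/-- Glue two one-sided paths into a two-sided path  (`p` forwards, `q` backwards). -/
def glue {d : ℕ} (p q : ℕ → Zd d) : ℤ → Zd d :=
  fun z => if 0 ≤ z then p z.toNat else q (-z).toNat

/-- `P(W[1,n] ∩ p[0,∞) = ∅)` as a function of the path `p`. -/
noncomputable def avoidOneSided {ΩW : Type*} [MeasurableSpace ΩW] (μW : Measure ΩW) {d : ℕ}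
    (W : ΩW → ℕ → Zd d) (n : ℕ) (p : ℕ → Zd d) : ℝ :=
  (μW {w | ∀ k, 1 ≤ k → k ≤ n → ∀ j : ℕ, W w k ≠ p j}).toReal

/-- `P(W[1,n] ∩ p[1,∞) = ∅)` as a function of the path `p`. -/
noncomputable def avoidOneSidedPlus {ΩW : Type*} [MeasurableSpace ΩW] (μW : Measure ΩW) {d : ℕ}
    (W : ΩW → ℕ → Zd d) (n : ℕ) (p : ℕ → Zd d) : ℝ :=
  (μW {w | ∀ k, 1 ≤ k → k ≤ n → ∀ j : ℕ, 1 ≤ j → W w k ≠ p j}).toReal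

/-- `P(W[1,∞) ∩ p[0,n] = ∅)` as a function of the one-sided path `p`. -/
noncomputable def avoidSeg {ΩW : Type*} [MeasurableSpace ΩW] (μW : Measure ΩW) {d : ℕ}
    (W : ΩW → ℕ → Zd d) (n : ℕ) (p : ℕ → Zd d) : ℝ :=
  (μW {w | ∀ k, 1 ≤ k → ∀ j : ℕ, j ≤ n → W w k ≠ p j}).toReal

/-- `P(W[1,∞) ∩ p[1,n] = ∅)` as a function of the one-sided path `p`. -/
noncomputable def avoidSegPlus {ΩW : Type*} [MeasurableSpace ΩW] (μW : Measure ΩW) {d : ℕ}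
    (W : ΩW → ℕ → Zd d) (n : ℕ) (p : ℕ → Zd d) : ℝ :=
  (μW {w | ∀ k, 1 ≤ k → ∀ j : ℕ, 1 ≤ j → j ≤ n → W w k ≠ p j}).toReal

/-- `P(W[1,∞) ∩ p[0,n] = ∅)` as a function of the two-sided path `p`. -/
noncomputable def avoidSegZ {ΩW : Type*} [MeasurableSpace ΩW] (μW : Measure ΩW) {d : ℕ}
    (W : ΩW → ℕ → Zd d) (n : ℕ) (p : ℤ → Zd d) : ℝ :=
  (μW {w | ∀ k, 1 ≤ k → ∀ j : ℕ, j ≤ n → W w k ≠ p (j : ℤ)}).toReal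

/-- `P(W[1,∞) ∩ p[1,n] = ∅)` as a function of the two-sided path `p`. -/
noncomputable def avoidSegZPlus {ΩW : Type*} [MeasurableSpace ΩW] (μW : Measure ΩW) {d : ℕ}
    (W : ΩW → ℕ → Zd d) (n : ℕ) (p : ℤ → Zd d) : ℝ :=
  (μW {w | ∀ k, 1 ≤ k → ∀ j : ℕ, 1 ≤ j → j ≤ n → W w k ≠ p (j : ℤ)}).toReal

/-!
Adding a point `y ∉ B` raises the capacity by `e_{B ∪ {y}}(y) · e_B(y)`, where `e_A(a)` is the
escape probability from `a`; the formula is the telescoping sum of these increments along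
`x_1, …, x_n`. For the one-point step put `C = B ∪ {y}`. A walk from `a` avoiding `B` either avoids
`C`, or its first visit to `C` is at `y`, after which (Markov property) it avoids `B` from `y`:
`e_B(a) = e_C(a) + r(a) e_B(y)` with `r(a) = P_a(first visit to C at y)`. Since the steps are
symmetric, reversing time shows `r(a) = P_y(first visit to C at a)`, so
`∑_{a ∈ C} r(a) = 1 - e_C(y)`. Summing the first identity over `a ∈ B` and using its case `a = y` gives the increment.
-/

open Finset

section Shift

variable {G : Type*}

def shift (m : ℕ) (ξ : ℕ → G) : ℕ → G := fun n => ξ (m + n)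

variable [MeasurableSpace G] (P : Measure G) [IsProbabilityMeasure P]

local notation "ν" => Measure.infinitePi fun _ : ℕ => P

lemma measurable_shift (m : ℕ) : Measurable (shift (G := G) m) :=
  measurable_pi_lambda _ fun n => measurable_pi_apply (m + n)

lemma map_shift (m : ℕ) : Measure.map (shift m) ν = ν :=
  Measure.map_infinitePi_infinitePi_of_inj (add_right_injective m)

lemma measure_inter_shift_preimage {m : ℕ} {S F : Set (ℕ → G)} (hS : MeasurableSet S)
    (hSm : ∀ ξ η : ℕ → G, (∀ i < m, ξ i = η i) → ξ ∈ S → η ∈ S) (hF : MeasurableSet F) :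
    ν (S ∩ shift m ⁻¹' F) = ν S * ν F := by
  rcases S.eq_empty_or_nonempty with rfl | ⟨η₀, -⟩
  · simp
  let σ : ℕ → MeasurableSpace (ℕ → G) := fun i => .comap (fun ξ => ξ i) ‹_›
  have hσ : ∀ {i} {I : Set ℕ}, i ∈ I → Measurable[⨆ j ∈ I, σ j] fun ξ : ℕ → G => ξ i :=
    fun {i} _ hi => (comap_measurable _).mono (le_iSup₂ (f := fun j (_ : j ∈ _) => σ j) i hi) le_rfl
  have hindep : Indep (⨆ i ∈ Set.Iio m, σ i) (⨆ i ∈ Set.Ici m, σ i) ν :=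
    indep_iSup_of_disjoint (fun i => (measurable_pi_apply i).comap_le)
      ((iIndepFun_iff_iIndep _ _ _).1
        (iIndepFun_infinitePi (X := fun _ x => x) fun _ => measurable_id))
      (Set.Iio_disjoint_Ici le_rfl)
  have hS' : MeasurableSet[⨆ i ∈ Set.Iio m, σ i] S := by
    -- `S` is its own preimage under a map that only reads the first `m` coordinates
    let trunc : (ℕ → G) → ℕ → G := fun ξ i => if i < m then ξ i else η₀ i
    have htrunc : Measurable[⨆ i ∈ Set.Iio m, σ i] trunc := by
      refine @measurable_pi_lambda _ _ _ (⨆ i ∈ Set.Iio m, σ i) _ _ fun i => ?_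
      by_cases hi : i < m
      · simpa [trunc, hi] using hσ (Set.mem_Iio.2 hi)
      · simp only [trunc, hi, if_false]
        exact @measurable_const _ _ _ (⨆ i ∈ Set.Iio m, σ i) _
    have : trunc ⁻¹' S = S := Set.ext fun ξ =>
      ⟨hSm _ _ fun i hi => by simp [trunc, hi], hSm _ _ fun i hi => by simp [trunc, hi]⟩
    exact this ▸ htrunc hS
  have hF' : MeasurableSet[⨆ i ∈ Set.Ici m, σ i] (shift m ⁻¹' F) :=
    (@measurable_pi_lambda _ _ _ (⨆ i ∈ Set.Ici m, σ i) _ (shift m)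
      fun n => hσ (Set.mem_Ici.2 (Nat.le_add_right m n))) hF
  rw [(Indep_iff _ _ _).1 hindep _ _ hS' hF', ← Measure.map_apply (measurable_shift m) hF,
    map_shift]

end Shift

section Walk

variable {G : Type*} [AddCommGroup G]

def walk (ξ : ℕ → G) (k : ℕ) : G := ∑ i ∈ range k, ξ i

def avoids (x : G) (A : Set G) : Set (ℕ → G) := {ξ | ∀ k, 1 ≤ k → x + walk ξ k ∉ A}

def firstVisitAt (x : G) (C : Set G) (a : G) (m : ℕ) : Set (ℕ → G) :=
  {ξ | x + walk ξ m = a ∧ ∀ j, 1 ≤ j → j < m → x + walk ξ j ∉ C}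

def firstVisit (x : G) (C : Set G) (a : G) : Set (ℕ → G) := ⋃ m, firstVisitAt x C a (m + 1)

/-- The first `m` steps run backwards, so that up to time `m` the walk of `reflect m ξ` is the
time reversal of the walk of `ξ`. -/
def reflect (m : ℕ) (ξ : ℕ → G) : ℕ → G := fun i => if i < m then -ξ (m - 1 - i) else ξ i

@[simp] lemma walk_zero (ξ : ℕ → G) : walk ξ 0 = 0 := sum_range_zero _

lemma walk_succ (ξ : ℕ → G) (k : ℕ) : walk ξ (k + 1) = walk ξ k + ξ k := sum_range_succ _ _

lemma walk_shift (m k : ℕ) (ξ : ℕ → G) : walk (shift m ξ) k = walk ξ (m + k) - walk ξ m := by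
  simp [walk, shift, sum_range_add]

lemma walk_congr {m k : ℕ} {ξ η : ℕ → G} (h : ∀ i < m, ξ i = η i) (hk : k ≤ m) :
    walk ξ k = walk η k :=
  sum_congr rfl fun i hi => h i (by simp at hi; omega)

lemma walk_reflect {m j : ℕ} (ξ : ℕ → G) (hj : j ≤ m) :
    walk (reflect m ξ) j = walk ξ (m - j) - walk ξ m := by
  induction j with
  | zero => simp
  | succ j ih =>
    have hmj : m - j = m - (j + 1) + 1 := by omega
    rw [walk_succ, ih (by omega), hmj, walk_succ, reflect, if_pos (by omega),
      show m - 1 - j = m - (j + 1) by omega]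
    abel

lemma add_walk_shift {x a : G} {ξ : ℕ → G} {m : ℕ} (h : x + walk ξ m = a) (k : ℕ) :
    a + walk (shift m ξ) k = x + walk ξ (m + k) := by
  rw [walk_shift, ← h]; abel

lemma avoids_anti {x : G} {A B : Set G} (h : A ⊆ B) : avoids x B ⊆ avoids x A :=
  fun _ hξ k hk hA => hξ k hk (h hA)

lemma notMem_avoids_iff {x : G} {C : Set G} {ξ : ℕ → G} :
    ξ ∉ avoids x C ↔ ∃ m, ∃ a ∈ C, ξ ∈ firstVisitAt x C a (m + 1) := by
  classical
  constructor
  · intro h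
    have hvisit : ∃ k, 1 ≤ k ∧ x + walk ξ k ∈ C := by
      simpa [avoids] using h
    obtain ⟨hk, hC⟩ := Nat.find_spec hvisit
    refine ⟨Nat.find hvisit - 1, _, hC, ?_, fun j hj hjm hjC => ?_⟩
    · rw [Nat.sub_add_cancel hk]
    · exact Nat.find_min hvisit (by omega) ⟨hj, hjC⟩
  · rintro ⟨m, a, ha, hm, -⟩ h
    exact h (m + 1) (by omega) (hm ▸ ha)

lemma firstVisitAt_unique {x a a' : G} {C : Set G} {m m' : ℕ} {ξ : ℕ → G} (ha : a ∈ C)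
    (ha' : a' ∈ C) (h : ξ ∈ firstVisitAt x C a (m + 1)) (h' : ξ ∈ firstVisitAt x C a' (m' + 1)) :
    m = m' ∧ a = a' := by
  obtain rfl : m = m' := by
    by_contra hne
    rcases Nat.lt_or_gt_of_ne hne with hlt | hlt
    · exact h'.2 (m + 1) (by omega) (by omega) (h.1 ▸ ha)
    · exact h.2 (m' + 1) (by omega) (by omega) (h'.1 ▸ ha')
  exact ⟨rfl, h.1.symm.trans h'.1⟩

lemma avoids_eq_union {x y : G} {B : Set G} (hy : y ∉ B) :
    avoids x B = avoids x (insert y B) ∪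
      ⋃ m, firstVisitAt x (insert y B) y (m + 1) ∩ shift (m + 1) ⁻¹' avoids y B := by
  ext ξ
  simp only [Set.mem_union, Set.mem_iUnion, Set.mem_inter_iff, Set.mem_preimage]
  constructor
  · intro hξ
    by_cases hC : ξ ∈ avoids x (insert y B)
    · exact .inl hC
    obtain ⟨m, a, ha, hm⟩ := notMem_avoids_iff.1 hC
    obtain rfl : a = y := (Set.mem_insert_iff.1 ha).resolve_right
      fun haB => hξ (m + 1) (by omega) (hm.1 ▸ haB)
    exact .inr ⟨m, hm, fun k hk => by rw [add_walk_shift hm.1]; exact hξ _ (by omega)⟩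
  · rintro (hξ | ⟨m, hm, hshift⟩) k hk
    · exact avoids_anti (Set.subset_insert y B) hξ k hk
    · rcases lt_trichotomy k (m + 1) with hlt | rfl | hgt
      · exact fun hB => hm.2 k hk hlt (Set.mem_insert_of_mem y hB)
      · rwa [hm.1]
      · have := hshift (k - (m + 1)) (by omega)
        rwa [add_walk_shift hm.1, Nat.add_sub_cancel' hgt.le] at this

lemma compl_avoids (x : G) (C : Set G) : (avoids x C)ᶜ = ⋃ a ∈ C, firstVisit x C a := by
  ext ξ
  simp only [Set.mem_compl_iff, notMem_avoids_iff, firstVisit, Set.mem_iUnion, exists_prop]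
  constructor
  · rintro ⟨m, a, ha, hm⟩; exact ⟨a, ha, m, hm⟩
  · rintro ⟨a, ha, m, hm⟩; exact ⟨m, a, ha, hm⟩

lemma reflect_reflect (m : ℕ) (ξ : ℕ → G) : reflect m (reflect m ξ) = ξ := by
  funext i
  by_cases hi : i < m
  · simp [reflect, hi, show m - 1 - i < m by omega, show m - 1 - (m - 1 - i) = i by omega]
  · simp [reflect, hi]

lemma reflect_mem_firstVisitAt {x a : G} {C : Set G} {m : ℕ} {ξ : ℕ → G}
    (h : ξ ∈ firstVisitAt x C a m) : reflect m ξ ∈ firstVisitAt a C x m := by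
  obtain ⟨hm, hC⟩ := h
  have hwalk : ∀ j ≤ m, a + walk (reflect m ξ) j = x + walk ξ (m - j) := fun j hj => by
    rw [walk_reflect ξ hj, ← hm]; abel
  refine ⟨by rw [hwalk m le_rfl, Nat.sub_self, walk_zero, add_zero], fun j hj hjm => ?_⟩
  rw [hwalk j hjm.le]
  exact hC _ (by omega) (by omega)

lemma reflect_preimage_firstVisitAt (x a : G) (C : Set G) (m : ℕ) :
    reflect m ⁻¹' firstVisitAt x C a m = firstVisitAt a C x m :=
  Set.ext fun ξ =>
    ⟨fun h => reflect_reflect m ξ ▸ reflect_mem_firstVisitAt h, reflect_mem_firstVisitAt⟩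

end Walk

section IIDWalk

variable {G : Type*} [AddCommGroup G] [MeasurableSpace G] [DiscreteMeasurableSpace G]

lemma measurable_reflect (m : ℕ) : Measurable (reflect (G := G) m) := by
  refine measurable_pi_lambda _ fun i => ?_
  by_cases hi : i < m
  · simpa [reflect, hi] using measurable_pi_apply (X := fun _ : ℕ => G) (m - 1 - i)
  · simpa [reflect, hi] using measurable_pi_apply i

variable (P : Measure G) [IsProbabilityMeasure P]

local notation "ν" => Measure.infinitePi fun _ : ℕ => P

lemma map_reflect (hP : P.map Neg.neg = P) (m : ℕ) : Measure.map (reflect m) ν = ν := by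
  let e : ℕ → ℕ := fun i => if i < m then m - 1 - i else i
  have he : Function.Injective e := fun i j h => by
    simp only [e] at h; split_ifs at h <;> omega
  let negBelow : (ℕ → G) → ℕ → G := fun ξ i => (if i < m then Neg.neg else id) (ξ i)
  have hreflect : reflect m = negBelow ∘ fun ξ i => ξ (e i) := by
    funext ξ i
    by_cases hi : i < m <;> simp [reflect, negBelow, e, hi]
  have hneg : Measurable negBelow :=
    measurable_pi_lambda _ fun i => Measurable.of_discrete.comp (measurable_pi_apply i)
  have hperm : Measurable fun (ξ : ℕ → G) i => ξ (e i) :=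
    measurable_pi_lambda _ fun i => measurable_pi_apply _
  rw [hreflect, ← Measure.map_map hneg hperm, Measure.map_infinitePi_infinitePi_of_inj he,
    Measure.infinitePi_map_pi _ fun i => .of_discrete]
  congr 1
  funext i
  split_ifs
  · exact hP
  · exact Measure.map_id

variable [Countable G]

lemma measurable_walk (k : ℕ) : Measurable fun ξ : ℕ → G => walk ξ k :=
  Finset.measurable_sum _ fun i _ => measurable_pi_apply i

lemma measurableSet_avoids (x : G) (A : Set G) : MeasurableSet (avoids x A) := by
  have : avoids x A = ⋂ k ∈ Set.Ici 1, (fun ξ => x + walk ξ k) ⁻¹' Aᶜ := by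
    ext ξ; simp [avoids]
  rw [this]
  exact .biInter (Set.to_countable _) fun k _ =>
    (measurable_const.add (measurable_walk k)) .of_discrete

lemma measurableSet_firstVisitAt (x : G) (C : Set G) (a : G) (m : ℕ) :
    MeasurableSet (firstVisitAt x C a m) := by
  have : firstVisitAt x C a m = (fun ξ => x + walk ξ m) ⁻¹' {a} ∩
      ⋂ j ∈ Set.Ico 1 m, (fun ξ => x + walk ξ j) ⁻¹' Cᶜ := by
    ext ξ; simp [firstVisitAt, and_imp]
  rw [this]
  exact ((measurable_const.add (measurable_walk m)) .of_discrete).inter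
    (.biInter (Set.to_countable _) fun j _ =>
      (measurable_const.add (measurable_walk j)) .of_discrete)

lemma measure_firstVisitAt_inter_shift (x : G) (C : Set G) (a : G) (m : ℕ) {F : Set (ℕ → G)}
    (hF : MeasurableSet F) :
    ν (firstVisitAt x C a m ∩ shift m ⁻¹' F) = ν (firstVisitAt x C a m) * ν F :=
  measure_inter_shift_preimage P (measurableSet_firstVisitAt x C a m)
    (fun _ _ h hξ =>
      ⟨walk_congr h le_rfl ▸ hξ.1, fun j hj hjm => walk_congr h hjm.le ▸ hξ.2 j hj hjm⟩)
    hF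

lemma measure_firstVisitAt_comm (hP : P.map Neg.neg = P) (x : G) (C : Set G) (a : G) (m : ℕ) :
    ν (firstVisitAt x C a m) = ν (firstVisitAt a C x m) := by
  rw [← reflect_preimage_firstVisitAt x a C m,
    ← Measure.map_apply (measurable_reflect m) (measurableSet_firstVisitAt x C a m),
    map_reflect P hP]

lemma measure_firstVisit (μ : Measure (ℕ → G)) {x a : G} {C : Set G} (ha : a ∈ C) :
    μ (firstVisit x C a) = ∑' m, μ (firstVisitAt x C a (m + 1)) :=
  measure_iUnion
    (fun _ _ hm => Set.disjoint_left.2 fun _ h h' => hm (firstVisitAt_unique ha ha h h').1)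
    fun m => measurableSet_firstVisitAt x C a (m + 1)

lemma measure_firstVisit_comm (hP : P.map Neg.neg = P) {x a : G} {C : Set G} (hx : x ∈ C)
    (ha : a ∈ C) : ν (firstVisit x C a) = ν (firstVisit a C x) := by
  rw [measure_firstVisit ν ha, measure_firstVisit ν hx]
  exact tsum_congr fun m => measure_firstVisitAt_comm P hP x C a (m + 1)

lemma measure_avoids_eq_add {x y : G} {B : Set G} (hy : y ∉ B) :
    ν (avoids x B) =
      ν (avoids x (insert y B)) + ν (firstVisit x (insert y B) y) * ν (avoids y B) := by
  have hyC : y ∈ insert y B := Set.mem_insert y B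
  rw [avoids_eq_union hy, measure_union, measure_iUnion, measure_firstVisit ν hyC,
    ← ENNReal.tsum_mul_right]
  · simp_rw [measure_firstVisitAt_inter_shift P x _ y _ (measurableSet_avoids y B)]
  · exact fun _ _ hm => Set.disjoint_left.2 fun _ h h' =>
      hm (firstVisitAt_unique hyC hyC h.1 h'.1).1
  · exact fun m => (measurableSet_firstVisitAt _ _ _ _).inter
      (measurable_shift _ (measurableSet_avoids y B))
  · exact Set.disjoint_iUnion_right.2 fun m => Set.disjoint_left.2 fun ξ hξ hm =>
      notMem_avoids_iff.2 ⟨m, y, hyC, hm.1⟩ hξ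
  · exact .iUnion fun m => (measurableSet_firstVisitAt _ _ _ _).inter
      (measurable_shift _ (measurableSet_avoids y B))

lemma measure_avoids_add_sum_firstVisit (y : G) (C : Finset G) :
    ν (avoids y C) + ∑ a ∈ C, ν (firstVisit y C a) = 1 := by
  rw [← measure_biUnion_finset, ← Finset.set_biUnion_coe, ← compl_avoids,
    prob_add_prob_compl (measurableSet_avoids y C)]
  · exact fun a ha a' ha' hne => Set.disjoint_left.2 fun ξ h h' => by
      simp only [firstVisit, Set.mem_iUnion] at h h'
      obtain ⟨m, h⟩ := h
      obtain ⟨m', h'⟩ := h'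
      exact hne (firstVisitAt_unique ha ha' h h').2
  · exact fun a _ => .iUnion fun m => measurableSet_firstVisitAt _ _ _ _

theorem sum_measure_avoids_insert (hP : P.map Neg.neg = P) [DecidableEq G] {B : Finset G} {y : G}
    (hy : y ∉ B) :
    ∑ a ∈ insert y B, (ν (avoids a ↑(insert y B))).toReal =
      ∑ a ∈ B, (ν (avoids a ↑B)).toReal +
        (ν (avoids y ↑(insert y B))).toReal * (ν (avoids y ↑B)).toReal := by
  set C := insert y B
  have hyC : y ∈ C := mem_insert_self y B
  have hlast : ∀ a ∈ C, (ν (avoids a B)).toReal =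
      (ν (avoids a C)).toReal + (ν (firstVisit y C a)).toReal * (ν (avoids y B)).toReal := by
    intro a ha
    have h := measure_avoids_eq_add P (x := a) (mt mem_coe.1 hy)
    rw [← coe_insert, measure_firstVisit_comm P hP (mem_coe.2 ha) (mem_coe.2 hyC)] at h
    rw [h, ENNReal.toReal_add (measure_ne_top _ _)
      (ENNReal.mul_ne_top (measure_ne_top _ _) (measure_ne_top _ _)), ENNReal.toReal_mul]
  have htotal : (ν (avoids y C)).toReal + ∑ a ∈ C, (ν (firstVisit y C a)).toReal = 1 := by
    have h := congrArg ENNReal.toReal (measure_avoids_add_sum_firstVisit P y C)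
    rwa [ENNReal.toReal_add (measure_ne_top _ _)
        (ENNReal.sum_ne_top.2 fun _ _ => measure_ne_top _ _),
      ENNReal.toReal_sum fun _ _ => measure_ne_top _ _, ENNReal.toReal_one] at h
  rw [sum_insert hy] at htotal ⊢
  rw [sum_congr rfl fun a ha => hlast a (mem_insert_of_mem ha), sum_add_distrib, ← sum_mul]
  linear_combination (-(ν (avoids y B)).toReal) * htotal - hlast y hyC

end IIDWalk

lemma telescope_image_prefixes {α M : Type*} [DecidableEq α] [AddCommGroup M] (F : Finset α → M)
    (g : α → Finset α → Finset α → M)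
    (hF : ∀ y B, y ∉ B → F (insert y B) = F B + g y (insert y B) B)
    {n : ℕ} (x : Fin n → α) (hx : Function.Injective x) :
    F (univ.image x) = F ∅ +
      ∑ k, g (x k) ((univ.filter fun i => i ≤ k).image x)
        ((univ.filter fun i => i < k).image x) := by
  let pre : ℕ → Finset α := fun k => (univ.filter fun i : Fin n => (i : ℕ) < k).image x
  have hsucc : ∀ k : Fin n, pre (k + 1) = insert (x k) (pre k) := fun k => by
    ext z
    simp only [pre, mem_image, mem_filter, mem_univ, true_and, mem_insert, Nat.lt_succ_iff_lt_or_eq]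
    constructor
    · rintro ⟨i, hi | hi, rfl⟩
      · exact .inr ⟨i, hi, rfl⟩
      · exact .inl (congrArg x (Fin.ext hi))
    · rintro (rfl | ⟨i, hi, rfl⟩)
      · exact ⟨k, .inr rfl, rfl⟩
      · exact ⟨i, .inl hi, rfl⟩
  have hnot : ∀ k : Fin n, x k ∉ pre k := fun k => by simp [pre, hx.eq_iff]
  have hle : ∀ k : Fin n, (univ.filter fun i => i ≤ k).image x = pre (k + 1) := fun k => by
    simp only [pre, Nat.lt_succ_iff, Fin.le_def]
  have hlt : ∀ k : Fin n, (univ.filter fun i => i < k).image x = pre k := fun k => by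
    simp only [pre, Fin.lt_def]
  calc F (univ.image x) = F ∅ + ∑ k ∈ range n, (F (pre (k + 1)) - F (pre k)) := by
        rw [sum_range_sub (fun k => F (pre k))]; simp [pre]
    _ = F ∅ + ∑ k : Fin n, (F (pre (k + 1)) - F (pre k)) := by
        rw [Fin.sum_univ_eq_sum_range (fun k => F (pre (k + 1)) - F (pre k))]
    _ = _ := by
        congr 1
        refine sum_congr rfl fun k _ => ?_
        rw [hle, hlt, hsucc, hF _ _ (hnot k), add_sub_cancel_left]

lemma neg_unitSteps (d : ℕ) : -unitSteps d = unitSteps d := by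
  ext x; simp [unitSteps]

lemma map_neg_uniformOn_unitSteps (d : ℕ) :
    (uniformOn (unitSteps d)).map Neg.neg = uniformOn (unitSteps d) := by
  ext t ht
  rw [Measure.map_apply measurable_neg ht, uniformOn, cond_apply .of_discrete,
    cond_apply .of_discrete]
  congr 1
  change Measure.count (unitSteps d ∩ -t) = _
  nth_rewrite 1 [← neg_unitSteps d]
  rw [← Set.inter_neg, Measure.measure_neg]

namespace IsSRW

variable {Ω : Type*} [MeasurableSpace Ω] {μ : Measure Ω} {d : ℕ} {W : Ω → ℕ → Zd d}

lemma measurable_increments (hW : IsSRW μ d W) :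
    Measurable fun ω n => W ω (n + 1) - W ω n :=
  measurable_pi_lambda _ fun n => (hW.meas (n + 1)).sub (hW.meas n)

lemma map_increments (hW : IsSRW μ d W) :
    μ.map (fun ω n => W ω (n + 1) - W ω n) =
      Measure.infinitePi fun _ => uniformOn (unitSteps d) := by
  rw [hW.indep.map_fun_eq_infinitePi_map (X := fun n ω => W ω (n + 1) - W ω n)
    fun n => (hW.meas (n + 1)).sub (hW.meas n)]
  simp_rw [hW.step]

lemma isProbabilityMeasure_uniformOn [IsProbabilityMeasure μ] (hW : IsSRW μ d W) :
    IsProbabilityMeasure (uniformOn (unitSteps d)) :=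
  hW.step 0 ▸ Measure.isProbabilityMeasure_map ((hW.meas 1).sub (hW.meas 0)).aemeasurable

lemma escProb_eq (hW : IsSRW μ d W) (x : Zd d) (A : Set (Zd d)) :
    escProb μ W x A =
      ((Measure.infinitePi fun _ : ℕ => uniformOn (unitSteps d)) (avoids x A)).toReal := by
  rw [escProb, ← hW.map_increments, Measure.map_apply hW.measurable_increments
    (measurableSet_avoids x A)]
  congr 1
  refine measure_congr (Filter.eventuallyEq_set.2 ?_)
  filter_upwards [hW.start] with ω h0
  have hwalk : ∀ k, walk (fun n => W ω (n + 1) - W ω n) k = W ω k := fun k => by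
    rw [walk, sum_range_sub, h0, sub_zero]
  simp [avoids, hwalk]

end IsSRW

theorem capacity_decomposition_general
    (d : ℕ)
    {ΩW : Type*} [MeasurableSpace ΩW] (μW : Measure ΩW) [IsProbabilityMeasure μW]
    (W : ΩW → ℕ → Zd d) (hW : IsSRW μW d W)
    (n : ℕ) (x : Fin n → Zd d) (hx : Function.Injective x) :
    cap μW W (Finset.univ.image x) =
      ∑ k : Fin n,
        escProb μW W (x k) ↑((Finset.univ.filter fun i => i ≤ k).image x) *
        escProb μW W (x k) ↑((Finset.univ.filter fun i => i < k).image x) := by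
  have := hW.isProbabilityMeasure_uniformOn
  set ν := Measure.infinitePi fun _ : ℕ => uniformOn (unitSteps d)
  have h := telescope_image_prefixes (fun B => ∑ a ∈ B, (ν (avoids a B)).toReal)
    (fun y S T => (ν (avoids y S)).toReal * (ν (avoids y T)).toReal)
    (fun y B hy => sum_measure_avoids_insert _ (map_neg_uniformOn_unitSteps d) hy) x hx
  simpa [cap, hW.escProb_eq] using h

/-- **Capacity decomposition (Lemma 3.3).**
For a finite set `A = {x_1, …, x_n} ⊂ ℤ^d` (`d ≥ 3`) of distinct points,
`Cap(A) = ∑_{k=1}^n P_{x_k}(W[1,∞) ∩ {x_1,…,x_k} = ∅) ⬝ P_{x_k}(W[1,∞) ∩ {x_1,…,x_{k−1}} = ∅)`. -/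
theorem capacity_decomposition
    (d : ℕ) (hd : 3 ≤ d)
    {ΩW : Type*} [MeasurableSpace ΩW] (μW : Measure ΩW) [IsProbabilityMeasure μW]
    (W : ΩW → ℕ → Zd d) (hW : IsSRW μW d W)
    (n : ℕ) (x : Fin n → Zd d) (hx : Function.Injective x) :
    cap μW W (Finset.univ.image x) =
      ∑ k : Fin n,
        escProb μW W (x k) ↑((Finset.univ.filter fun i => i ≤ k).image x) *
        escProb μW W (x k) ↑((Finset.univ.filter fun i => i < k).image x) :=
  capacity_decomposition_general d μW W hW n x hx

end LERWCap
end

section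
/- Let (a_n)_{n∈N} and (b_n)_{n∈N} be strictly increasing sequences with a_n positive integers and b_n positive reals, and let f : N → [0,∞) be a decreasing function such that b_{a_n} · f(a_n) → x as n → ∞. For each n, let k_n be the index such that a_{k_n} ≤ n ≤ a_{k_n + 1}. If b_{a_{k_n}} / b_{a_{k_n + 1}} → 1 as n → ∞, then b_n · f(n) → x as n → ∞. -/
open MeasureTheory ProbabilityTheory Filter Topology

namespace LERWCap

/-! Squeeze `b_n f(n)` between `b_{a_k} f(a_{k+1})` and `b_{a_{k+1}} f(a_k)`, where `k = k_n`:
these are `b_{a_k} f(a_k)` and `b_{a_{k+1}} f(a_{k+1})` rescaled by the ratio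
`b_{a_k} / b_{a_{k+1}}` or its inverse, so both tend to `x`
along `k_n → ∞` (forced by `n ≤ a_{k_n+1}`). -/

theorem comap_atTop_le_cofinite {α β : Type*} [Preorder β] [NoMaxOrder β] (g : α → β) :
    comap g atTop ≤ cofinite :=
  le_cofinite_iff_eventually_ne.2 fun i =>
    ((eventually_gt_atTop (g i)).comap g).mono fun _ hj hji => (hji ▸ hj).false

theorem tendsto_atTop_of_tendsto_comp {ι β : Type*} [Preorder β] [NoMaxOrder β] {l : Filter ι}
    {g : ℕ → β} {h : ι → ℕ} (hgh : Tendsto (g ∘ h) l atTop) : Tendsto h l atTop :=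
  hgh.of_tendsto_comp (Nat.cofinite_eq_atTop ▸ comap_atTop_le_cofinite g)

theorem tendsto_mul_of_bracket {ι α : Type*} [Preorder α] {l : Filter ι} {B F : α → ℝ} {x : ℝ}
    (hB : Monotone B) (hBpos : ∀ n, 0 < B n) (hF : Antitone F) (hF0 : ∀ n, 0 ≤ F n)
    {lo hi m : ι → α} (hlo : Tendsto (fun i => B (lo i) * F (lo i)) l (𝓝 x))
    (hhi : Tendsto (fun i => B (hi i) * F (hi i)) l (𝓝 x))
    (hratio : Tendsto (fun i => B (lo i) / B (hi i)) l (𝓝 1))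
    (hm : ∀ᶠ i in l, lo i ≤ m i ∧ m i ≤ hi i) :
    Tendsto (fun i => B (m i) * F (m i)) l (𝓝 x) := by
  have hratio_inv : Tendsto (fun i => B (hi i) / B (lo i)) l (𝓝 1) := by
    simpa only [inv_div, inv_one] using hratio.inv₀ one_ne_zero
  refine tendsto_of_tendsto_of_tendsto_of_le_of_le' (by simpa using hratio.mul hhi)
    (by simpa using hratio_inv.mul hlo) ?_ ?_
  · filter_upwards [hm] with i ⟨hlo_le, hle_hi⟩
    calc B (lo i) / B (hi i) * (B (hi i) * F (hi i)) = B (lo i) * F (hi i) := by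
          field_simp [(hBpos (hi i)).ne']
      _ ≤ B (m i) * F (m i) := mul_le_mul (hB hlo_le) (hF hle_hi) (hF0 _) (hBpos _).le
  · filter_upwards [hm] with i ⟨hlo_le, hle_hi⟩
    calc B (m i) * F (m i) ≤ B (hi i) * F (lo i) :=
          mul_le_mul (hB hle_hi) (hF hlo_le) (hF0 _) (hBpos _).le
      _ = B (hi i) / B (lo i) * (B (lo i) * F (lo i)) := by
          field_simp [(hBpos (lo i)).ne']

theorem subsequential_to_full_convergence_general
    (a : ℕ → ℕ) (b : ℕ → ℝ) (f : ℕ → ℝ) (x : ℝ) (k : ℕ → ℕ)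
    (hb : StrictMono b) (hbpos : ∀ n, 0 < b n)
    (hf : Antitone f) (hf0 : ∀ n, 0 ≤ f n)
    (hconv : Tendsto (fun n => b (a n) * f (a n)) atTop (𝓝 x))
    (hk : ∀ n, a 1 ≤ n → a (k n) ≤ n ∧ n ≤ a (k n + 1))
    (hratio : Tendsto (fun n => b (a (k n)) / b (a (k n + 1))) atTop (𝓝 1)) :
    Tendsto (fun n => b n * f n) atTop (𝓝 x) := by
  have hbracket : ∀ᶠ n in atTop, a (k n) ≤ n ∧ n ≤ a (k n + 1) :=
    (eventually_ge_atTop (a 1)).mono hk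
  have hk_tendsto : Tendsto k atTop atTop :=
    tendsto_atTop_of_tendsto_comp (g := fun i => a (i + 1))
      (tendsto_atTop_mono' _ (hbracket.mono fun _ h => h.2) tendsto_id)
  exact tendsto_mul_of_bracket hb.monotone hbpos hf hf0 (hconv.comp hk_tendsto)
    (((tendsto_add_atTop_iff_nat 1).2 hconv).comp hk_tendsto) hratio hbracket

/-- **From subsequential to full convergence (Lemma 3.5).**
Let `(a_n)` and `(b_n)` be strictly increasing (with `a_n ∈ ℕ`, `b_n > 0` real) and let
`f : ℕ → [0,∞)` be decreasing with `b_{a_n} f(a_n) → x`. If `k_n` satisfies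
`a_{k_n} ≤ n ≤ a_{k_n+1}` (for `n ≥ a_1`) and `b_{a_{k_n}}/b_{a_{k_n+1}} → 1`,
then `b_n f(n) → x`. -/
theorem subsequential_to_full_convergence
    (a : ℕ → ℕ) (b : ℕ → ℝ) (f : ℕ → ℝ) (x : ℝ) (k : ℕ → ℕ)
    (ha : StrictMono a) (hb : StrictMono b) (hbpos : ∀ n, 0 < b n)
    (hf : Antitone f) (hf0 : ∀ n, 0 ≤ f n)
    (hconv : Tendsto (fun n => b (a n) * f (a n)) atTop (𝓝 x))
    (hk : ∀ n, a 1 ≤ n → a (k n) ≤ n ∧ n ≤ a (k n + 1))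
    (hratio : Tendsto (fun n => b (a (k n)) / b (a (k n + 1))) atTop (𝓝 1)) :
    Tendsto (fun n => b n * f n) atTop (𝓝 x) :=
  subsequential_to_full_convergence_general a b f x k hb hbpos hf hf0 hconv hk hratio

end LERWCap
end
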